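/- Let H be a real Hilbert space, A : H →L[ℝ] H a bounded self-adjoint operator, and let α > 0 and Q₀ ∈ H satisfy ⟪Q₀, A Q₀⟫ < −α² ‖Q₀‖². If Q : ℝ → H is a solution of the linearized evolution equation Q''(t) = −A (Q(t)) with Q(0) = Q₀ and Q'(0) = 0, then exp(−2 α t) · ‖Q'(t)‖² tends to infinity as t → ∞, where Q' denotes the derivative of Q. -/

import Mathlib

open scoped RealInnerProductSpace

/-!
Put `I = ‖Q‖²`, `g = ⟪Q, Q'⟫`, `K = ‖Q'‖²` and let `E = K + ⟪Q, A Q⟫ < 0` be the conserved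
energy. Then `I' = 2g`, `g' = 2K - E` and, by Cauchy–Schwarz, `g² ≤ I K`. Hence `g ≥ -E t`, so
`I` grows at least quadratically, and the quotient `(g / I)² - E / I` is nondecreasing, its
derivative being `4 g (I K - g²) / I³`. Its initial value is `ω² = -E / I 0`, and `E / I → 0`,
so for every `β < ω` eventually `g ≥ β I`. Then `I` grows like `exp (2 β t)` and `K ≥ β² I`.
-/

open Set Filter Real Topology

lemma monotoneOn_Ici_of_hasDerivAt_nonneg {f f' : ℝ → ℝ} {a : ℝ}
    (hf : ∀ x ∈ Ici a, HasDerivAt f (f' x) x) (hf' : ∀ x ∈ Ici a, 0 ≤ f' x) :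
    MonotoneOn f (Ici a) :=
  monotoneOn_of_hasDerivWithinAt_nonneg (convex_Ici a)
    (fun x hx => (hf x hx).continuousAt.continuousWithinAt)
    (fun x hx => (hf x (interior_subset hx)).hasDerivWithinAt)
    (fun x hx => hf' x (interior_subset hx))

lemma mul_exp_le_of_mul_le_deriv {f f' : ℝ → ℝ} {a k : ℝ}
    (hf : ∀ x ∈ Ici a, HasDerivAt f (f' x) x) (hf' : ∀ x ∈ Ici a, k * f x ≤ f' x)
    {t : ℝ} (ht : a ≤ t) : f a * exp (k * (t - a)) ≤ f t := by
  have hmono : MonotoneOn (fun x => f x * exp (k * (a - x))) (Ici a) := by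
    refine monotoneOn_Ici_of_hasDerivAt_nonneg
      (f' := fun x => (f' x - k * f x) * exp (k * (a - x))) (fun x hx => ?_)
      (fun x hx => mul_nonneg (sub_nonneg.2 (hf' x hx)) (exp_pos _).le)
    refine ((hf x hx).mul (((hasDerivAt_id x).const_sub a).const_mul k).exp).congr_deriv ?_
    simp only [id]
    ring
  calc f a * exp (k * (t - a))
      ≤ f t * exp (k * (a - t)) * exp (k * (t - a)) := by
        gcongr
        simpa using hmono self_mem_Ici ht ht
    _ = f t := by rw [mul_assoc, ← exp_add, ← mul_add, sub_add_sub_cancel, sub_self, mul_zero,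
      exp_zero, mul_one]

structure IsVirialSystem (I g K : ℝ → ℝ) (E : ℝ) : Prop where
  hasDerivAt_I : ∀ t, HasDerivAt I (2 * g t) t
  hasDerivAt_g : ∀ t, HasDerivAt g (2 * K t - E) t
  K_nonneg : ∀ t, 0 ≤ K t
  sq_g_le : ∀ t, g t ^ 2 ≤ I t * K t

namespace IsVirialSystem

variable {I g K : ℝ → ℝ} {E : ℝ}

lemma neg_mul_le_g (h : IsVirialSystem I g K E) (hg0 : g 0 = 0) {t : ℝ} (ht : 0 ≤ t) :
    -E * t ≤ g t := by
  have hmono : MonotoneOn (fun t => g t + E * t) (Ici 0) :=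
    monotoneOn_Ici_of_hasDerivAt_nonneg (f' := fun x => 2 * K x)
      (fun x _ => ((h.hasDerivAt_g x).add ((hasDerivAt_id x).const_mul E)).congr_deriv
        (by ring))
      (fun x _ => by linarith [h.K_nonneg x])
  have := hmono self_mem_Ici ht ht
  simp only [hg0] at this
  linarith

lemma g_nonneg (h : IsVirialSystem I g K E) (hg0 : g 0 = 0) (hE : E ≤ 0) {t : ℝ} (ht : 0 ≤ t) :
    0 ≤ g t :=
  (mul_nonneg (neg_nonneg.2 hE) ht).trans (h.neg_mul_le_g hg0 ht)

lemma I_zero_sub_le_I (h : IsVirialSystem I g K E) (hg0 : g 0 = 0) {t : ℝ} (ht : 0 ≤ t) :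
    I 0 - E * t ^ 2 ≤ I t := by
  have hmono : MonotoneOn (fun t => I t + E * t ^ 2) (Ici 0) :=
    monotoneOn_Ici_of_hasDerivAt_nonneg (f' := fun x => 2 * g x + E * (2 * x))
      (fun x _ => ((h.hasDerivAt_I x).add ((hasDerivAt_pow 2 x).const_mul E)).congr_deriv
        (by norm_num))
      (fun x hx => by have := h.neg_mul_le_g hg0 hx; nlinarith)
  have := hmono self_mem_Ici ht ht
  simp only at this
  linarith

lemma tendsto_I_atTop (h : IsVirialSystem I g K E) (hg0 : g 0 = 0) (hE : E < 0) :
    Tendsto I atTop atTop := by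
  have hquad : Tendsto (fun t : ℝ => I 0 - E * t ^ 2) atTop atTop := by
    simp_rw [sub_eq_add_neg, ← neg_mul]
    exact tendsto_atTop_add_const_left _ _
      ((tendsto_pow_atTop two_ne_zero).const_mul_atTop (neg_pos.2 hE))
  exact tendsto_atTop_mono' _ ((eventually_ge_atTop 0).mono fun t ht => h.I_zero_sub_le_I hg0 ht)
    hquad

lemma I_pos (h : IsVirialSystem I g K E) (hg0 : g 0 = 0) (hI0 : 0 < I 0) (hE : E ≤ 0)
    {t : ℝ} (ht : 0 ≤ t) : 0 < I t := by
  nlinarith [h.I_zero_sub_le_I hg0 ht, sq_nonneg t]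

-- At `t = 0` this quotient is the Rayleigh quotient `-⟪Q₀, A Q₀⟫ / ‖Q₀‖²`.
lemma hasDerivAt_rayleigh (h : IsVirialSystem I g K E) {t : ℝ} (ht : I t ≠ 0) :
    HasDerivAt (fun t => (g t / I t) ^ 2 - E / I t)
      (4 * g t * (I t * K t - g t ^ 2) / I t ^ 3) t := by
  refine ((((h.hasDerivAt_g t).div (h.hasDerivAt_I t) ht).pow 2).sub
    ((hasDerivAt_const t E).div (h.hasDerivAt_I t) ht)).congr_deriv ?_
  norm_num only [Pi.div_apply, pow_one]
  field_simp
  ring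

lemma le_rayleigh (h : IsVirialSystem I g K E) (hg0 : g 0 = 0) (hI0 : 0 < I 0) (hE : E ≤ 0)
    {t : ℝ} (ht : 0 ≤ t) : -E / I 0 ≤ (g t / I t) ^ 2 - E / I t := by
  have hmono : MonotoneOn (fun t => (g t / I t) ^ 2 - E / I t) (Ici 0) :=
    monotoneOn_Ici_of_hasDerivAt_nonneg
      (fun x hx => h.hasDerivAt_rayleigh (h.I_pos hg0 hI0 hE hx).ne')
      (fun x hx => div_nonneg
        (mul_nonneg (mul_nonneg zero_le_four (h.g_nonneg hg0 hE hx)) (sub_nonneg.2 (h.sq_g_le x)))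
        (pow_pos (h.I_pos hg0 hI0 hE hx) 3).le)
  simpa [hg0, neg_div] using hmono self_mem_Ici ht ht

lemma eventually_mul_le_g (h : IsVirialSystem I g K E) (hg0 : g 0 = 0) (hI0 : 0 < I 0)
    {β : ℝ} (hβ : 0 ≤ β) (hβE : β ^ 2 * I 0 < -E) : ∀ᶠ t in atTop, β * I t ≤ g t := by
  have hE : E < 0 := by nlinarith [sq_nonneg β]
  have hgap : 0 < -E / I 0 - β ^ 2 := by rw [sub_pos, lt_div_iff₀ hI0]; exact hβE
  have hsmall : Tendsto (fun t => -E / I t) atTop (𝓝 0) :=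
    tendsto_const_nhds.div_atTop (h.tendsto_I_atTop hg0 hE)
  filter_upwards [eventually_ge_atTop 0, hsmall.eventually (gt_mem_nhds hgap)] with t ht hIt
  have hI := h.I_pos hg0 hI0 hE.le ht
  have hsq : β ^ 2 ≤ (g t / I t) ^ 2 := by
    have := h.le_rayleigh hg0 hI0 hE.le ht
    rw [neg_div (I t)] at hIt
    linarith
  rw [← le_div_iff₀ hI]
  exact (pow_le_pow_iff_left₀ hβ (div_nonneg (h.g_nonneg hg0 hE.le ht) hI.le) two_ne_zero).1 hsq

lemma sq_mul_le_K (h : IsVirialSystem I g K E) {β t : ℝ} (hβ : 0 ≤ β) (hI : 0 < I t)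
    (hg : β * I t ≤ g t) : β ^ 2 * I t ≤ K t := by
  have : (β * I t) ^ 2 ≤ I t * K t :=
    (pow_le_pow_left₀ (mul_nonneg hβ hI.le) hg 2).trans (h.sq_g_le t)
  nlinarith

theorem tendsto_exp_mul_K (h : IsVirialSystem I g K E) (hg0 : g 0 = 0) (hI0 : 0 < I 0)
    {α : ℝ} (hα : α ^ 2 * I 0 < -E) :
    Tendsto (fun t => exp (-2 * α * t) * K t) atTop atTop := by
  obtain ⟨β, hαβ, hβω⟩ : ∃ β, |α| < β ∧ β < √(-E / I 0) := by
    refine exists_between ((Real.lt_sqrt (abs_nonneg α)).2 ?_)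
    rwa [sq_abs, lt_div_iff₀ hI0]
  have hβ : 0 < β := (abs_nonneg α).trans_lt hαβ
  have hβE : β ^ 2 * I 0 < -E := by
    rwa [← lt_div_iff₀ hI0, ← Real.lt_sqrt hβ.le]
  have hE : E ≤ 0 := by nlinarith [sq_nonneg β]
  obtain ⟨T, hT⟩ := eventually_atTop.1
    ((eventually_ge_atTop 0).and (h.eventually_mul_le_g hg0 hI0 hβ.le hβE))
  have hgrowth : ∀ t ≥ T, I T * exp (2 * β * (t - T)) ≤ I t := fun t ht =>
    mul_exp_le_of_mul_le_deriv (fun x _ => h.hasDerivAt_I x)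
      (fun x hx => by linarith [(hT x hx).2]) ht
  have hIT := h.I_pos hg0 hI0 hE (hT T le_rfl).1
  have hlower : Tendsto (fun t => β ^ 2 * I T * exp (-(2 * β * T)) * exp (2 * (β - α) * t))
      atTop atTop :=
    (tendsto_exp_atTop.comp (tendsto_id.const_mul_atTop (by linarith [le_abs_self α]))
      ).const_mul_atTop (by positivity)
  refine tendsto_atTop_mono' _ ((eventually_ge_atTop T).mono fun t ht => ?_) hlower
  have hexp : exp (-(2 * β * T)) * exp (2 * (β - α) * t) =
      exp (-2 * α * t) * exp (2 * β * (t - T)) := by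
    rw [← exp_add, ← exp_add]
    ring_nf
  calc β ^ 2 * I T * exp (-(2 * β * T)) * exp (2 * (β - α) * t)
      = exp (-2 * α * t) * (β ^ 2 * (I T * exp (2 * β * (t - T)))) := by
        linear_combination (β ^ 2 * I T) * hexp
    _ ≤ exp (-2 * α * t) * (β ^ 2 * I t) := by gcongr; exact hgrowth t ht
    _ ≤ exp (-2 * α * t) * K t := by
        gcongr
        exact h.sq_mul_le_K hβ.le (h.I_pos hg0 hI0 hE ((hT T le_rfl).1.trans ht)) (hT t ht).2

end IsVirialSystem

section WaveEquation

variable {H : Type*} [NormedAddCommGroup H] [InnerProductSpace ℝ H] {A : H →L[ℝ] H} {Q Q' : ℝ → H}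

lemma energy_conservation (hA : (A : H →ₗ[ℝ] H).IsSymmetric) (hQ : ∀ t, HasDerivAt Q (Q' t) t)
    (hQ' : ∀ t, HasDerivAt Q' (-A (Q t)) t) (t : ℝ) :
    ‖Q' t‖ ^ 2 + ⟪Q t, A (Q t)⟫ = ‖Q' 0‖ ^ 2 + ⟪Q 0, A (Q 0)⟫ := by
  have hderiv : ∀ t, HasDerivAt (fun t => ‖Q' t‖ ^ 2 + ⟪Q t, A (Q t)⟫) 0 t := fun t => by
    refine ((hQ' t).norm_sq.add
      ((hQ t).inner ℝ (A.hasFDerivAt.comp_hasDerivAt t (hQ t)))).congr_deriv ?_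
    have : ⟪Q t, A (Q' t)⟫ = ⟪Q' t, A (Q t)⟫ := by
      rw [← real_inner_comm]
      exact hA _ _
    rw [inner_neg_right, Function.comp_apply, this]
    ring
  exact is_const_of_deriv_eq_zero (fun t => (hderiv t).differentiableAt)
    (fun t => (hderiv t).deriv) t 0

lemma isVirialSystem_of_hasDerivAt (hA : (A : H →ₗ[ℝ] H).IsSymmetric)
    (hQ : ∀ t, HasDerivAt Q (Q' t) t) (hQ' : ∀ t, HasDerivAt Q' (-A (Q t)) t) :
    IsVirialSystem (fun t => ‖Q t‖ ^ 2) (fun t => ⟪Q t, Q' t⟫) (fun t => ‖Q' t‖ ^ 2)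
      (‖Q' 0‖ ^ 2 + ⟪Q 0, A (Q 0)⟫) where
  hasDerivAt_I t := (hQ t).norm_sq
  hasDerivAt_g t := by
    refine ((hQ t).inner ℝ (hQ' t)).congr_deriv ?_
    rw [inner_neg_right, real_inner_self_eq_norm_sq, ← energy_conservation hA hQ hQ' t]
    ring
  K_nonneg t := by positivity
  sq_g_le t := by
    rw [← mul_pow, ← sq_abs]
    exact pow_le_pow_left₀ (abs_nonneg _) (abs_real_inner_le_norm _ _) 2

end WaveEquation

theorem stmt_5_general {H : Type*} [NormedAddCommGroup H] [InnerProductSpace ℝ H]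
    (A : H →L[ℝ] H)
    (hA : ∀ x y : H, ⟪A x, y⟫ = ⟪x, A y⟫)
    (α : ℝ) (Q₀ : H)
    (hneg : ⟪Q₀, A Q₀⟫ < -α ^ 2 * ‖Q₀‖ ^ 2) (Q : ℝ → H)
    (hQ : Differentiable ℝ Q) (hQ' : Differentiable ℝ (deriv Q))
    (hEq : ∀ t : ℝ, deriv (deriv Q) t = -A (Q t))
    (hQ0 : Q 0 = Q₀) (h0 : deriv Q 0 = 0) :
    Filter.Tendsto (fun t : ℝ => Real.exp (-2 * α * t) * ‖deriv Q t‖ ^ 2)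
      Filter.atTop Filter.atTop := by
  have hsys := isVirialSystem_of_hasDerivAt hA (fun t => (hQ t).hasDerivAt)
    (fun t => hEq t ▸ (hQ' t).hasDerivAt)
  have hQ₀ : Q₀ ≠ 0 := by
    rintro rfl
    simp at hneg
  refine hsys.tendsto_exp_mul_K (by simp [h0]) (hQ0 ▸ pow_pos (norm_pos_iff.2 hQ₀) 2) ?_
  simp only [h0, hQ0, norm_zero]
  linarith

/-- Variational principle for instability, kinetic-energy form: if
`⟪Q₀, A Q₀⟫ < -α² ‖Q₀‖²` with `α > 0`, then the solution of `Q'' = -A Q` with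
`Q 0 = Q₀`, `Q' 0 = 0` satisfies `exp(-2αt) ‖Q'(t)‖² → ∞` as `t → ∞`. -/
theorem stmt_5 {H : Type*} [NormedAddCommGroup H] [InnerProductSpace ℝ H]
    [CompleteSpace H] (A : H →L[ℝ] H)
    (hA : ∀ x y : H, ⟪A x, y⟫ = ⟪x, A y⟫)
    (α : ℝ) (hα : 0 < α) (Q₀ : H)
    (hneg : ⟪Q₀, A Q₀⟫ < -α ^ 2 * ‖Q₀‖ ^ 2) (Q : ℝ → H)
    (hQ : Differentiable ℝ Q) (hQ' : Differentiable ℝ (deriv Q))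
    (hEq : ∀ t : ℝ, deriv (deriv Q) t = -A (Q t))
    (hQ0 : Q 0 = Q₀) (h0 : deriv Q 0 = 0) :
    Filter.Tendsto (fun t : ℝ => Real.exp (-2 * α * t) * ‖deriv Q t‖ ^ 2)
      Filter.atTop Filter.atTop :=
  stmt_5_general A hA α Q₀ hneg Q hQ hQ' hEq hQ0 h0
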